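/- If a finite simple graph G has at least one edge, then Z_L(G) + 1 ≤ Z_ℓ̇(G). -/

import Mathlib

/-!
Let `B` be a minimum `Z_ℓ̇` forcing set and look at its first force `x → y`. If `x ≠ y`, drop `x`
from `B`: under `Z_L` the vertex `x` first forces `y` by the `Z_−` rule (as `x ∉ N(x)`) and then
itself, after which the original forcing process continues. If `x = y` has a neighbour `z`, drop
`z`, which `x` forces by the `Z_−` rule. If `x = y` is isolated, its self-force can be postponed,
so we recurse on the remaining forces; if no forces are left, `B` is everything and an endpoint `u`
of an edge can force itself. Hence `Z_L(G) ≤ |B| - 1`.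
-/

namespace ZFGrundy

variable {V : Type*}

/-- `u` is a member of the closed neighborhood `N[x]` of `x` in `G`. -/
def ClosedNbr (G : SimpleGraph V) (x u : V) : Prop := u = x ∨ G.Adj x u

/-- CCR-Z: the force `x → y` is valid w.r.t. blue set `S` if `y ∉ S`, `y ∈ N(x)`,
and `N[x] \ {y} ⊆ S`. -/
def ZForce (G : SimpleGraph V) (S : Set V) (x y : V) : Prop :=
  y ∉ S ∧ G.Adj x y ∧ ∀ u, ClosedNbr G x u → u ≠ y → u ∈ S

/-- CCR-Z_ℓ̇: the force `x → y` is valid w.r.t. blue set `S` if `y ∉ S`, `y ∈ N[x]`,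
and `N[x] \ {y} ⊆ S`. -/
def ZelldForce (G : SimpleGraph V) (S : Set V) (x y : V) : Prop :=
  y ∉ S ∧ ClosedNbr G x y ∧ ∀ u, ClosedNbr G x u → u ≠ y → u ∈ S

/-- CCR-Z_−: the force `x → y` is valid w.r.t. blue set `S` if `y ∉ S`, `y ∈ N(x)`,
and `N(x) \ {y} ⊆ S`. -/
def ZminusForce (G : SimpleGraph V) (S : Set V) (x y : V) : Prop :=
  y ∉ S ∧ G.Adj x y ∧ ∀ u, G.Adj x u → u ≠ y → u ∈ S

/-- CCR-Z_L: either `x ≠ y` and the force is valid under CCR-Z_−, or `x = y` and the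
force is valid under CCR-Z_ℓ̇. -/
def ZLForce (G : SimpleGraph V) (S : Set V) (x y : V) : Prop :=
  (x ≠ y ∧ ZminusForce G S x y) ∨ (x = y ∧ ZelldForce G S x y)

/-- `B` is a zero forcing set of `G` with respect to the color change rule `force`:
there is an ordering `b 0, …, b (k-1)` of the vertices outside `B` and vertices
`a 0, …, a (k-1)` such that each force `a i → b i` is valid w.r.t. the blue set
consisting of all vertices other than `b i, b (i+1), …, b (k-1)`. -/
def IsZFS (G : SimpleGraph V) (force : SimpleGraph V → Set V → V → V → Prop)
    (B : Finset V) : Prop :=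
  ∃ (k : ℕ) (b a : Fin k → V), Function.Injective b ∧
    (∀ v : V, v ∉ B ↔ ∃ i, b i = v) ∧
    ∀ i : Fin k, force G {v | ∀ j : Fin k, i ≤ j → v ≠ b j} (a i) (b i)

/-- The zero forcing number with respect to the color change rule `force`. -/
noncomputable def zfNum (G : SimpleGraph V)
    (force : SimpleGraph V → Set V → V → V → Prop) : ℕ :=
  sInf {m : ℕ | ∃ B : Finset V, IsZFS G force B ∧ B.card = m}

/-- A Z-sequence: distinct vertices with `N(v i) \ ⋃_{j<i} N[v j] ≠ ∅`. -/
def IsZSeq (G : SimpleGraph V) {k : ℕ} (v : Fin k → V) : Prop :=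
  Function.Injective v ∧
  ∀ i, ∃ u, G.Adj (v i) u ∧ ∀ j, j < i → ¬ ClosedNbr G (v j) u

/-- A dominating sequence: distinct vertices with `N[v i] \ ⋃_{j<i} N[v j] ≠ ∅`. -/
def IsDomSeq (G : SimpleGraph V) {k : ℕ} (v : Fin k → V) : Prop :=
  Function.Injective v ∧
  ∀ i, ∃ u, ClosedNbr G (v i) u ∧ ∀ j, j < i → ¬ ClosedNbr G (v j) u

/-- A total dominating sequence: distinct vertices with `N(v i) \ ⋃_{j<i} N(v j) ≠ ∅`. -/
def IsTotDomSeq (G : SimpleGraph V) {k : ℕ} (v : Fin k → V) : Prop :=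
  Function.Injective v ∧
  ∀ i, ∃ u, G.Adj (v i) u ∧ ∀ j, j < i → ¬ G.Adj (v j) u

/-- An L-sequence: distinct vertices with `N[v i] \ ⋃_{j<i} N(v j) ≠ ∅`. -/
def IsLSeq (G : SimpleGraph V) {k : ℕ} (v : Fin k → V) : Prop :=
  Function.Injective v ∧
  ∀ i, ∃ u, ClosedNbr G (v i) u ∧ ∀ j, j < i → ¬ G.Adj (v j) u

/-- The Z-Grundy domination number: the largest length of a Z-sequence. -/
noncomputable def grundyZ (G : SimpleGraph V) : ℕ :=
  sSup {k : ℕ | ∃ v : Fin k → V, IsZSeq G v}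

/-- The Grundy domination number: the largest length of a dominating sequence. -/
noncomputable def grundyDom (G : SimpleGraph V) : ℕ :=
  sSup {k : ℕ | ∃ v : Fin k → V, IsDomSeq G v}

/-- The Grundy total domination number: the largest length of a total dominating
sequence. -/
noncomputable def grundyTot (G : SimpleGraph V) : ℕ :=
  sSup {k : ℕ | ∃ v : Fin k → V, IsTotDomSeq G v}

/-- The L-Grundy domination number: the largest length of an L-sequence. -/
noncomputable def grundyL (G : SimpleGraph V) : ℕ :=
  sSup {k : ℕ | ∃ v : Fin k → V, IsLSeq G v}

/-- The largest length of a total dominating sequence using only vertices of `X`. -/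
noncomputable def grundyTotOn (G : SimpleGraph V) (X : Set V) : ℕ :=
  sSup {k : ℕ | ∃ v : Fin k → V, IsTotDomSeq G v ∧ ∀ i, v i ∈ X}

/-- The domination number: minimum size of a set `X` such that every vertex outside
`X` has a neighbor in `X`. -/
noncomputable def domNum (G : SimpleGraph V) : ℕ :=
  sInf {m : ℕ | ∃ X : Finset V, (∀ v, v ∉ X → ∃ u ∈ X, G.Adj v u) ∧ X.card = m}

/-- The vertex cover number: minimum size of a set of vertices meeting every edge. -/
noncomputable def vcNum (G : SimpleGraph V) : ℕ :=
  sInf {m : ℕ | ∃ C : Finset V, (∀ u w, G.Adj u w → u ∈ C ∨ w ∈ C) ∧ C.card = m}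

/-- The family `S(G)` of real symmetric matrices whose off-diagonal entry `A i j`
is nonzero exactly when `i` and `j` are adjacent in `G`. -/
def SFam (G : SimpleGraph V) : Set (Matrix V V ℝ) :=
  {A | A.IsSymm ∧ ∀ i j : V, i ≠ j → (A i j ≠ 0 ↔ G.Adj i j)}

/-- The family `S_ℓ̇(G)`: matrices in `S(G)` with all diagonal entries nonzero. -/
def SldFam (G : SimpleGraph V) : Set (Matrix V V ℝ) :=
  {A | A ∈ SFam G ∧ ∀ i : V, A i i ≠ 0}

/-- The family `S_0(G)`: matrices in `S(G)` with all diagonal entries zero. -/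
def S0Fam (G : SimpleGraph V) : Set (Matrix V V ℝ) :=
  {A | A ∈ SFam G ∧ ∀ i : V, A i i = 0}

/-- The bipartite graph `B_L(G)` on `{x_i} ∪ {y_i} ∪ {z_i}` (encoded as
`Sum.inl i`, `Sum.inr (Sum.inl i)`, `Sum.inr (Sum.inr i)`), with edges `{x i, y j}`
and `{x i, z j}` for every edge `{i, j}` of `G`, together with edges `{x i, y i}`
for every vertex `i`. -/
def BL (G : SimpleGraph V) : SimpleGraph (V ⊕ V ⊕ V) :=
  SimpleGraph.fromRel fun p q =>
    match p, q with
    | Sum.inl i, Sum.inr (Sum.inl j) => G.Adj i j ∨ i = j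
    | Sum.inl i, Sum.inr (Sum.inr j) => G.Adj i j
    | _, _ => False

/-- An inductive form of `IsZFS` on the blue set, free of the chronological indexing by `Fin k`. -/
inductive ForcesAll (force : SimpleGraph V → Set V → V → V → Prop) (G : SimpleGraph V) :
    Set V → Prop
  | univ : ForcesAll force G Set.univ
  | step {S : Set V} {x y : V} :
      y ∉ S → force G S x y → ForcesAll force G (insert y S) → ForcesAll force G S

namespace ForcesAll

variable {force force' : SimpleGraph V → Set V → V → V → Prop} {G : SimpleGraph V}

theorem mono (h : ∀ S x y, force G S x y → force' G S x y) {S : Set V}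
    (hS : ForcesAll force G S) : ForcesAll force' G S := by
  induction hS with
  | univ => exact .univ
  | step hy hxy _ ih => exact .step hy (h _ _ _ hxy) ih

end ForcesAll

section Chronological

variable {force : SimpleGraph V → Set V → V → V → Prop} {G : SimpleGraph V}

def blueBefore {k : ℕ} (b : Fin k → V) (i : Fin k) : Set V :=
  {v | ∀ j, i ≤ j → v ≠ b j}

theorem blueBefore_zero {k : ℕ} {b : Fin (k + 1) → V} {S : Set V}
    (hS : ∀ v, v ∉ S ↔ ∃ i, b i = v) : blueBefore b 0 = S := by
  ext v
  rw [← not_iff_not, hS v]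
  simp [blueBefore, eq_comm]

theorem blueBefore_succ {k : ℕ} (b : Fin (k + 1) → V) (i : Fin k) :
    blueBefore b i.succ = blueBefore (fun j => b j.succ) i := by
  ext v
  simp [blueBefore, Fin.forall_fin_succ, Fin.succ_le_succ_iff]

theorem forcesAll_of_chronological : ∀ {k : ℕ} {b a : Fin k → V} {S : Set V},
    Function.Injective b → (∀ v, v ∉ S ↔ ∃ i, b i = v) →
    (∀ i, force G (blueBefore b i) (a i) (b i)) → ForcesAll force G S
  | 0, _, _, S, _, hS, _ => by
    obtain rfl : S = Set.univ := Set.eq_univ_of_forall fun v => by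
      by_contra hv
      exact ((hS v).1 hv).elim fun i _ => i.elim0
    exact .univ
  | k + 1, b, a, S, hb, hS, hforce => by
    refine .step ((hS _).2 ⟨0, rfl⟩) (blueBefore_zero hS ▸ hforce 0)
      (forcesAll_of_chronological (b := fun i => b i.succ) (a := fun i => a i.succ)
        (hb.comp (Fin.succ_injective _)) (fun v => ?_)
        (fun i => blueBefore_succ b i ▸ hforce i.succ))
    simp only [Set.mem_insert_iff, not_or, hS, Fin.exists_fin_succ]
    constructor
    · rintro ⟨hv, h0 | hi⟩
      exacts [(hv h0.symm).elim, hi]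
    · rintro ⟨i, rfl⟩
      exact ⟨fun h => Fin.succ_ne_zero i (hb h), .inr ⟨i, rfl⟩⟩

theorem IsZFS.of_insert {B : Finset V} {x y : V} [DecidableEq V] (hy : y ∉ B)
    (hforce : force G B x y) (h : IsZFS G force (insert y B)) : IsZFS G force B := by
  obtain ⟨k, b, a, hb, hB, hforces⟩ := h
  have hS : ∀ v, v ∉ B ↔ ∃ i, (Fin.cons y b : Fin (k + 1) → V) i = v := fun v => by
    simp only [Fin.exists_fin_succ, Fin.cons_zero, Fin.cons_succ, ← hB, Finset.mem_insert]
    grind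
  refine ⟨k + 1, Fin.cons y b, Fin.cons x a, Fin.cons_injective_iff.2 ⟨?_, hb⟩, hS, ?_⟩
  · rintro ⟨i, hi⟩
    exact (hB y).2 ⟨i, hi⟩ (Finset.mem_insert_self y B)
  · refine Fin.cases ?_ fun i => ?_
    · change force G (blueBefore _ 0) _ _
      rw [blueBefore_zero hS, Fin.cons_zero, Fin.cons_zero]
      exact hforce
    · change force G (blueBefore _ i.succ) _ _
      rw [blueBefore_succ, Fin.cons_succ, Fin.cons_succ]
      exact hforces i

theorem isZFS_iff_forcesAll {B : Finset V} :
    IsZFS G force B ↔ ForcesAll force G (B : Set V) := by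
  classical
  constructor
  · rintro ⟨k, b, a, hb, hB, hforce⟩
    exact forcesAll_of_chronological hb hB hforce
  · generalize hS : (B : Set V) = S
    intro h
    induction h generalizing B with
    | univ =>
      refine ⟨0, Fin.elim0, Fin.elim0, fun i => i.elim0, fun v => ?_, fun i => i.elim0⟩
      simp [← Finset.mem_coe, hS]
    | step hy hxy _ ih =>
      subst hS
      exact .of_insert hy hxy (ih (by simp))

end Chronological

section Rules

variable {G : SimpleGraph V} {S : Set V} {x y : V}

theorem ZelldForce.zlForce (h : ZelldForce G S x y) : ZLForce G S x y := by
  obtain ⟨hy, hxy, hS⟩ := h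
  rcases hxy with rfl | hadj
  · exact .inr ⟨rfl, hy, .inl rfl, hS⟩
  · exact .inl ⟨hadj.ne, hy, hadj, fun u hu => hS u (.inr hu)⟩

theorem zlForce_self (hx : x ∉ S) (hS : ∀ u, G.Adj x u → u ∈ S) : ZLForce G S x x :=
  .inr ⟨rfl, hx, .inl rfl, fun u hu hne => hu.elim (fun h => (hne h).elim) (hS u)⟩

theorem zlForce_of_adj (hy : y ∉ S) (hxy : G.Adj x y) (hS : ∀ u, G.Adj x u → u ≠ y → u ∈ S) :
    ZLForce G S x y :=
  .inl ⟨hxy.ne, hy, hxy, hS⟩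

/-- The witness is non-isolated so that, when an isolated vertex forces itself first, the witness
given by the induction hypothesis is not that vertex. -/
theorem ForcesAll.exists_sdiff_zl {u w : V} (huw : G.Adj u w) (hS : ForcesAll ZelldForce G S) :
    ∃ c ∈ S, (∃ z, G.Adj c z) ∧ ForcesAll ZLForce G (S \ {c}) := by
  induction hS with
  | univ =>
    refine ⟨u, trivial, ⟨w, huw⟩, .step (fun h => h.2 rfl)
      (zlForce_self (fun h => h.2 rfl) fun v hv => ⟨trivial, hv.ne'⟩) ?_⟩
    rw [Set.insert_sdiff_self_of_mem (Set.mem_univ u)]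
    exact .univ
  | @step S x y hy hforce hrest ih =>
    obtain ⟨-, hxy, hblue⟩ := hforce
    rcases hxy with rfl | hadj
    · by_cases hiso : ∃ z, G.Adj y z
      · obtain ⟨z, hz⟩ := hiso
        have hzS : z ∈ S := hblue z (.inr hz) hz.ne'
        refine ⟨z, hzS, ⟨y, hz.symm⟩, .step (fun h => h.2 rfl)
          (zlForce_of_adj (fun h => h.2 rfl) hz fun v hv hne =>
            ⟨hblue v (.inr hv) hv.ne', hne⟩) ?_⟩
        rw [Set.insert_sdiff_self_of_mem hzS]
        exact (ForcesAll.step hy ⟨hy, .inl rfl, hblue⟩ hrest).mono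
          fun _ _ _ => ZelldForce.zlForce
      · push Not at hiso
        obtain ⟨c, hc, hcz, hrest'⟩ := ih
        have hcy : c ≠ y := by
          rintro rfl
          exact hcz.elim hiso
        refine ⟨c, hc.resolve_left hcy, hcz, .step (fun h => hy h.1)
          (zlForce_self (fun h => hy h.1) fun v hv => (hiso v hv).elim) ?_⟩
        rwa [Set.insert_sdiff_singleton_comm hcy.symm]
    · have hxS : x ∈ S := hblue x (.inl rfl) hadj.ne
      have hloop : ZLForce G (insert y (S \ {x})) x x :=
        zlForce_self (by simp [hadj.ne, hxS]) fun v hv => by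
          rcases eq_or_ne v y with rfl | hne
          exacts [Set.mem_insert v _, .inr ⟨hblue v (.inr hv) hne, hv.ne'⟩]
      refine ⟨x, hxS, ⟨y, hadj⟩, .step (fun h => hy h.1)
        (zlForce_of_adj (fun h => hy h.1) hadj fun v hv hne => ⟨hblue v (.inr hv) hne, hv.ne'⟩)
        (.step (by simp [hadj.ne]) hloop ?_)⟩
      rw [Set.insert_comm, Set.insert_sdiff_self_of_mem hxS]
      exact hrest.mono fun _ _ _ => ZelldForce.zlForce

end Rules

section Numbers

variable {force : SimpleGraph V → Set V → V → V → Prop} {G : SimpleGraph V}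

theorem zfNum_le_card {B : Finset V} (h : IsZFS G force B) : zfNum G force ≤ B.card :=
  Nat.sInf_le ⟨B, h, rfl⟩

theorem exists_isZFS_card_eq_zfNum [Fintype V] :
    ∃ B : Finset V, IsZFS G force B ∧ B.card = zfNum G force :=
  Nat.sInf_mem (s := {m | ∃ B : Finset V, IsZFS G force B ∧ B.card = m})
    ⟨_, Finset.univ, isZFS_iff_forcesAll.2 (by simpa using ForcesAll.univ), rfl⟩

end Numbers

/-- if `G` has at least one edge then `Z_L(G) + 1 ≤ Z_ℓ̇(G)`. -/
theorem statement_9 {V : Type*} [Fintype V] (G : SimpleGraph V)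
    (hedge : ∃ u w : V, G.Adj u w) :
    zfNum G ZLForce + 1 ≤ zfNum G ZelldForce := by
  classical
  obtain ⟨u, w, huw⟩ := hedge
  obtain ⟨B, hB, hcard⟩ := exists_isZFS_card_eq_zfNum (G := G) (force := ZelldForce)
  obtain ⟨c, hc, -, hBc⟩ := (isZFS_iff_forcesAll.1 hB).exists_sdiff_zl huw
  have hZL : IsZFS G ZLForce (B.erase c) := isZFS_iff_forcesAll.2 (by rwa [Finset.coe_erase])
  have hle := zfNum_le_card hZL
  rw [Finset.card_erase_of_mem hc] at hle
  have hpos := Finset.card_pos.2 ⟨c, hc⟩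
  omega

end ZFGrundy
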